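/- Let A be an Iwanaga-Gorenstein finite dimensional algebra over a field K. Then every simple right A-module S has finite grade, i.e. there exists some i ≥ 0 with Ext_A^i(S, A) ≠ 0. -/

import Mathlib

/-! ## Basic homological algebra infrastructure for (right) modules over a ring -/

universe u

section Core

variable (B : Type u) [Ring B]

/-- A projective resolution `⋯ → P 1 → P 0 → M → 0` of a module `M`. -/
structure ProjRes (M : Type u) [AddCommGroup M] [Module B M] where
  P : ℕ → Type u
  [acg : ∀ n, AddCommGroup (P n)]
  [mod : ∀ n, Module B (P n)]
  proj : ∀ n, Module.Projective B (P n)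
  d : (n : ℕ) → P (n + 1) →ₗ[B] P n
  π : P 0 →ₗ[B] M
  surj : Function.Surjective π
  exact_at_zero : Function.Exact (d 0) π
  exact : ∀ n, Function.Exact (d (n + 1)) (d n)

attribute [instance] ProjRes.acg ProjRes.mod

/-- An injective coresolution `0 → M → I 0 → I 1 → ⋯` of a module `M`. -/
structure InjCores (M : Type u) [AddCommGroup M] [Module B M] where
  I : ℕ → Type u
  [acg : ∀ n, AddCommGroup (I n)]
  [mod : ∀ n, Module B (I n)]
  inj : ∀ n, Module.Injective B (I n)
  ι : M →ₗ[B] I 0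
  d : (n : ℕ) → I n →ₗ[B] I (n + 1)
  mono : Function.Injective ι
  exact_at_zero : Function.Exact ι (d 0)
  exact : ∀ n, Function.Exact (d n) (d (n + 1))

attribute [instance] InjCores.acg InjCores.mod

variable {B}

/-- A submodule `N ≤ M` is essential if it intersects every nonzero submodule
nontrivially. -/
def IsEssentialSub {M : Type u} [AddCommGroup M] [Module B M] (N : Submodule B M) : Prop :=
  ∀ L : Submodule B M, L ≠ ⊥ → N ⊓ L ≠ ⊥

/-- A submodule `N ≤ M` is superfluous if `N ⊔ L = ⊤` forces `L = ⊤`. -/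
def IsSuperfluousSub {M : Type u} [AddCommGroup M] [Module B M] (N : Submodule B M) : Prop :=
  ∀ L : Submodule B M, N ⊔ L = ⊤ → L = ⊤

variable (B)

/-- A minimal injective coresolution: an injective coresolution in which the image of each
map into `I n` is an essential submodule of `I n`. -/
structure MinInjCores (M : Type u) [AddCommGroup M] [Module B M] extends InjCores B M where
  essential_at_zero : IsEssentialSub (LinearMap.range ι)
  essential : ∀ n, IsEssentialSub (LinearMap.range (d n))

/-- A minimal projective resolution: a projective resolution in which all the kernels
are superfluous submodules. -/
structure MinProjRes (M : Type u) [AddCommGroup M] [Module B M] extends ProjRes B M where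
  superfluous_at_zero : IsSuperfluousSub (LinearMap.ker π)
  superfluous : ∀ n, IsSuperfluousSub (LinearMap.ker (d n))

/-- The projective dimension of a module, defined as the infimum (in `ℕ∞`) of the lengths
of projective resolutions of the module. -/
noncomputable def pdim (M : Type u) [AddCommGroup M] [Module B M] : ℕ∞ :=
  sInf ((fun n : ℕ => (n : ℕ∞)) ''
    {n | ∃ R : ProjRes B M, ∀ i, n < i → Subsingleton (R.P i)})

/-- The injective dimension of a module, defined as the infimum (in `ℕ∞`) of the lengths
of injective coresolutions of the module. -/
noncomputable def idim (M : Type u) [AddCommGroup M] [Module B M] : ℕ∞ :=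
  sInf ((fun n : ℕ => (n : ℕ∞)) ''
    {n | ∃ R : InjCores B M, ∀ i, n < i → Subsingleton (R.I i)})

variable {B}

/-- The cochain groups `Hom_B(P n, N)` of the complex computing `Ext_B(M, N)`. -/
def homC {M : Type u} [AddCommGroup M] [Module B M] (R : ProjRes B M)
    (N : Type u) [AddCommGroup N] [Module B N] (n : ℕ) : Type u :=
  R.P n →ₗ[B] N

noncomputable instance {M : Type u} [AddCommGroup M] [Module B M] (R : ProjRes B M)
    (N : Type u) [AddCommGroup N] [Module B N] (n : ℕ) : AddCommGroup (homC R N n) :=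
  inferInstanceAs (AddCommGroup (R.P n →ₗ[B] N))

/-- The differential of the complex `Hom_B(P •, N)`, given by precomposition with `R.d n`. -/
noncomputable def extδ {M : Type u} [AddCommGroup M] [Module B M] (R : ProjRes B M)
    (N : Type u) [AddCommGroup N] [Module B N] (n : ℕ) : homC R N n →+ homC R N (n + 1) where
  toFun f := (f : R.P n →ₗ[B] N).comp (R.d n)
  map_zero' := LinearMap.zero_comp _
  map_add' f g := LinearMap.add_comp _ _ _

/-- Cocycles of the complex `Hom_B(P •, N)`. -/
noncomputable def extCocycles {M : Type u} [AddCommGroup M] [Module B M] (R : ProjRes B M)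
    (N : Type u) [AddCommGroup N] [Module B N] (n : ℕ) : AddSubgroup (homC R N n) :=
  (extδ R N n).ker

/-- Coboundaries of the complex `Hom_B(P •, N)`. -/
noncomputable def extCobound {M : Type u} [AddCommGroup M] [Module B M] (R : ProjRes B M)
    (N : Type u) [AddCommGroup N] [Module B N] : (n : ℕ) → AddSubgroup (homC R N n)
  | 0 => ⊥
  | (m + 1) => (extδ R N m).range

/-- The Ext group `Ext_B^n(M, N)`, computed as the `n`-th cohomology of the complex
`Hom_B(P •, N)` for a projective resolution `P •` of `M`. -/
noncomputable def ExtGrp {M : Type u} [AddCommGroup M] [Module B M] (R : ProjRes B M)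
    (N : Type u) [AddCommGroup N] [Module B N] (n : ℕ) : Type u :=
  extCocycles R N n ⧸ (extCobound R N n).addSubgroupOf (extCocycles R N n)

variable (B)

/-- `Ext_B^n(M, B) ≠ 0` (computed with any projective resolution of `M`). -/
def ExtRegNonzero (M : Type u) [AddCommGroup M] [Module B M] (n : ℕ) : Prop :=
  ∃ R : ProjRes B M, Nontrivial (ExtGrp R B n)

/-- The grade of a module: the infimum of the `i` with `Ext^i(M, B) ≠ 0`. -/
noncomputable def gradeM (M : Type u) [AddCommGroup M] [Module B M] : ℕ∞ :=
  sInf ((fun n : ℕ => (n : ℕ∞)) '' {n | ExtRegNonzero B M n})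

/-- `B` is Auslander-Gorenstein if the regular module has finite injective dimension and
in a minimal injective coresolution `0 → B → I^0 → I^1 → ⋯` one has `pdim I^i ≤ i` for all
`i`. -/
def IsAuslanderGorenstein : Prop :=
  idim B B < ⊤ ∧ ∀ (R : MinInjCores B B) (i : ℕ), pdim B (R.I i) ≤ (i : ℕ∞)

/-- `B` has finite global dimension. -/
def HasFiniteGlobalDimension : Prop :=
  ∃ n : ℕ, ∀ (M : Type u) [AddCommGroup M] [Module B M], pdim B M ≤ (n : ℕ∞)

/-- `B` is Auslander regular if it is Auslander-Gorenstein of finite global dimension. -/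
def IsAuslanderRegular : Prop :=
  IsAuslanderGorenstein B ∧ HasFiniteGlobalDimension B

end Core

section Extras1

variable (B : Type u) [Ring B]

/-- A ring is Iwanaga-Gorenstein if it has finite injective dimension as a right module
and as a left module over itself.  (For `B = Aᵐᵒᵖ` this says that the algebra `A` is
Iwanaga-Gorenstein; right `A`-modules are left `Aᵐᵒᵖ`-modules.) -/
def IsIwanagaGorensteinAlg (A : Type u) [Ring A] : Prop :=
  idim Aᵐᵒᵖ Aᵐᵒᵖ < ⊤ ∧ idim A A < ⊤

/-- `f : S →ₗ[B] I` exhibits `I` as an injective envelope of `S`. -/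
def IsInjectiveEnvelope {S I : Type u} [AddCommGroup S] [Module B S]
    [AddCommGroup I] [Module B I] (f : S →ₗ[B] I) : Prop :=
  Module.Injective B I ∧ Function.Injective f ∧ IsEssentialSub (LinearMap.range f)

/-- `X` is (isomorphic to) a direct summand of `Y`. -/
def IsDirectSummandMod {X Y : Type u} [AddCommGroup X] [Module B X]
    [AddCommGroup Y] [Module B Y] : Prop :=
  ∃ (s : X →ₗ[B] Y) (r : Y →ₗ[B] X), r ∘ₗ s = LinearMap.id

/-- An indecomposable module: nonzero, and not the internal direct sum of two nonzero
submodules. -/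
def IsIndecomposableMod (M : Type u) [AddCommGroup M] [Module B M] : Prop :=
  Nontrivial M ∧ ∀ N₁ N₂ : Submodule B M, IsCompl N₁ N₂ → N₁ = ⊥ ∨ N₂ = ⊥

end Extras1


/-! If `Ext^i(S, A)` vanished for all `i`, the `A`-dual `0 → F₀* → F₁* → ⋯` of a finite free
resolution `⋯ → F₁ → F₀ → S` would be an exact complex of finitely generated projective left
`A`-modules. Dimension shifting along a finite injective coresolution of `A` as a left module
shows that `Hom_A(-, A)` keeps it exact at `F₀*`; as finite free modules are reflexive, this says
that `F₁ → F₀` is onto, i.e. `S = 0`. -/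

section InjectiveCoresolution

variable {B : Type u} [Ring B]

theorem Module.Injective.exists_comp_eq_of_ker_le {X Y J : Type u} [AddCommGroup X] [Module B X]
    [AddCommGroup Y] [Module B Y] [AddCommGroup J] [Module B J] [Module.Injective B J]
    (f : X →ₗ[B] Y) (φ : X →ₗ[B] J) (h : LinearMap.ker f ≤ LinearMap.ker φ) :
    ∃ ψ : Y →ₗ[B] J, ψ ∘ₗ f = φ := by
  obtain ⟨ψ, hψ⟩ := Module.Injective.out ((LinearMap.ker f).liftQ f le_rfl)
    (LinearMap.ker_eq_bot.1 (Submodule.ker_liftQ_eq_bot _ _ _ le_rfl))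
    ((LinearMap.ker f).liftQ φ h)
  exact ⟨ψ, LinearMap.ext fun x => hψ (Submodule.Quotient.mk x)⟩

theorem LinearMap.exists_comp_eq_of_range_le {X Y M : Type u} [AddCommGroup X] [Module B X]
    [AddCommGroup Y] [Module B Y] [AddCommGroup M] [Module B M] {ι : X →ₗ[B] M}
    (hι : Function.Injective ι) (u : Y →ₗ[B] M) (h : LinearMap.range u ≤ LinearMap.range ι) :
    ∃ ψ : Y →ₗ[B] X, ι ∘ₗ ψ = u :=
  ⟨(LinearEquiv.ofInjective ι hι).symm ∘ₗ u.codRestrict _ fun y => h ⟨y, rfl⟩,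
    LinearMap.ext fun y => by simp⟩

theorem exists_injCores_of_idim_lt_top {M : Type u} [AddCommGroup M] [Module B M]
    (h : idim B M < ⊤) : ∃ (m : ℕ) (R : InjCores B M), ∀ i, m < i → Subsingleton (R.I i) := by
  obtain ⟨_, ⟨m, hm, rfl⟩, -⟩ := sInf_lt_iff.1 h
  exact ⟨m, hm⟩

def InjCores.tail {N : Type u} [AddCommGroup N] [Module B N] (R : InjCores B N) :
    InjCores B (LinearMap.range (R.d 0)) where
  I n := R.I (n + 1)
  inj n := R.inj (n + 1)
  ι := (LinearMap.range (R.d 0)).subtype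
  d n := R.d (n + 1)
  mono := Subtype.val_injective
  exact_at_zero := by
    rw [LinearMap.exact_iff, Submodule.range_subtype, (R.exact 0).linearMap_ker_eq]
  exact n := R.exact (n + 1)

theorem InjCores.exists_comp_eq_ι_comp {N X Y : Type u} [AddCommGroup N] [Module B N]
    [AddCommGroup X] [Module B X] [AddCommGroup Y] [Module B Y] (R : InjCores B N)
    (f : X →ₗ[B] Y) (φ : X →ₗ[B] N) (h : LinearMap.ker f ≤ LinearMap.ker φ) :
    ∃ ψ : Y →ₗ[B] R.I 0, ψ ∘ₗ f = R.ι ∘ₗ φ :=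
  have := R.inj 0
  Module.Injective.exists_comp_eq_of_ker_le f (R.ι ∘ₗ φ) (h.trans (LinearMap.ker_le_ker_comp φ R.ι))

theorem exists_comp_eq_of_comp_eq_of_range_le {X Y Z M : Type u} [AddCommGroup X] [Module B X]
    [AddCommGroup Y] [Module B Y] [AddCommGroup Z] [Module B Z] [AddCommGroup M] [Module B M]
    {ι : X →ₗ[B] M} (hι : Function.Injective ι) (δ : Z →ₗ[B] Y) (φ : Z →ₗ[B] X)
    (u : Y →ₗ[B] M) (hu : u ∘ₗ δ = ι ∘ₗ φ) (hrange : LinearMap.range u ≤ LinearMap.range ι) :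
    ∃ ψ : Y →ₗ[B] X, ψ ∘ₗ δ = φ := by
  obtain ⟨ψ, rfl⟩ := LinearMap.exists_comp_eq_of_range_le hι u hrange
  exact ⟨ψ, (LinearMap.cancel_left hι).1 hu⟩

theorem exists_comp_eq_of_exact_of_injCores (m : ℕ) {N : Type u} [AddCommGroup N] [Module B N]
    (R : InjCores B N) (hR : ∀ i, m < i → Subsingleton (R.I i))
    (Q : ℕ → Type u) [∀ n, AddCommGroup (Q n)] [∀ n, Module B (Q n)]
    (hQ : ∀ n, Module.Projective B (Q (n + 1))) (δ : ∀ n, Q n →ₗ[B] Q (n + 1))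
    (hδ : ∀ n, Function.Exact (δ n) (δ (n + 1)))
    (φ : Q 0 →ₗ[B] N) (hφ : LinearMap.ker (δ 0) ≤ LinearMap.ker φ) :
    ∃ ψ : Q 1 →ₗ[B] N, ψ ∘ₗ δ 0 = φ := by
  induction m generalizing N Q with
  | zero =>
    obtain ⟨ψ₀, hψ₀⟩ := R.exists_comp_eq_ι_comp (δ 0) φ hφ
    have : Subsingleton (R.I 1) := hR 1 one_pos
    refine exists_comp_eq_of_comp_eq_of_range_le R.mono (δ 0) φ ψ₀ hψ₀ ?_
    rw [← R.exact_at_zero.linearMap_ker_eq, Subsingleton.elim (R.d 0) 0, LinearMap.ker_zero]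
    exact le_top
  | succ m ih =>
    obtain ⟨ψ₀, hψ₀⟩ := R.exists_comp_eq_ι_comp (δ 0) φ hφ
    -- Push `ψ₀` to the first cosyzygy, where the shorter coresolution `R.tail` applies.
    let p := (R.d 0).rangeRestrict
    have hpι : p ∘ₗ R.ι = 0 :=
      LinearMap.ext fun x => Subtype.ext (R.exact_at_zero.apply_apply_eq_zero x)
    obtain ⟨χ, hχ⟩ := ih R.tail (fun i hi => hR (i + 1) (by omega)) (fun n => Q (n + 1))
      (fun n => hQ (n + 1)) (fun n => δ (n + 1)) (fun n => hδ (n + 1)) (p ∘ₗ ψ₀) (by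
        rw [(hδ 0).linearMap_ker_eq, LinearMap.range_le_ker_iff, LinearMap.comp_assoc, hψ₀,
          ← LinearMap.comp_assoc, hpι, LinearMap.zero_comp])
    have := hQ 1
    obtain ⟨χ', hχ'⟩ :=
      Module.projective_lifting_property p χ (LinearMap.surjective_rangeRestrict _)
    refine exists_comp_eq_of_comp_eq_of_range_le R.mono (δ 0) φ (ψ₀ - χ' ∘ₗ δ 1) ?_ ?_
    · rw [LinearMap.sub_comp, LinearMap.comp_assoc, (hδ 0).linearMap_comp_eq_zero,
        LinearMap.comp_zero, sub_zero, hψ₀]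
    · rw [← R.exact_at_zero.linearMap_ker_eq, ← LinearMap.ker_rangeRestrict,
        LinearMap.range_le_ker_iff, LinearMap.comp_sub, ← LinearMap.comp_assoc, hχ', sub_eq_zero]
      exact hχ.symm

end InjectiveCoresolution

section ExtVanishing

variable {B : Type u} [Ring B] {M N : Type u} [AddCommGroup M] [Module B M]
  [AddCommGroup N] [Module B N] (R : ProjRes B M)

theorem mem_extCobound_of_subsingleton {n : ℕ} (h : Subsingleton (ExtGrp R N n))
    (f : homC R N n) (hf : extδ R N n f = 0) : f ∈ extCobound R N n := by
  have : (QuotientAddGroup.mk ⟨f, hf⟩ : ExtGrp R N n) = 0 := h.elim _ _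
  exact AddSubgroup.mem_addSubgroupOf.1 ((QuotientAddGroup.eq_zero_iff _).1 this)

theorem exact_comp_of_subsingleton_extGrp {n : ℕ} (h : Subsingleton (ExtGrp R N (n + 1))) :
    Function.Exact (fun f : R.P n →ₗ[B] N => f ∘ₗ R.d n) (fun f => f ∘ₗ R.d (n + 1)) := by
  intro f
  refine ⟨mem_extCobound_of_subsingleton R h f, ?_⟩
  rintro ⟨g, rfl⟩
  show (g ∘ₗ R.d n) ∘ₗ R.d (n + 1) = 0
  rw [LinearMap.comp_assoc, (R.exact n).linearMap_comp_eq_zero, LinearMap.comp_zero]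

end ExtVanishing

section Duality

open MulOpposite

variable {A : Type u} [Ring A]

variable (A) in
def freeDualEquiv (k : ℕ) : ((Fin k → Aᵐᵒᵖ) →ₗ[Aᵐᵒᵖ] Aᵐᵒᵖ) ≃ₗ[A] (Fin k → A) :=
  (LinearMap.lsum Aᵐᵒᵖ (fun _ : Fin k => Aᵐᵒᵖ) A).symm ≪≫ₗ
    LinearEquiv.piCongrRight
      fun _ => LinearMap.ringLmapEquivSelf Aᵐᵒᵖ A Aᵐᵒᵖ ≪≫ₗ (opLinearEquiv A).symm

instance (k : ℕ) : Module.Projective A ((Fin k → Aᵐᵒᵖ) →ₗ[Aᵐᵒᵖ] Aᵐᵒᵖ) :=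
  Module.Projective.of_equiv (freeDualEquiv A k).symm

def dualEval {M : Type u} [AddCommGroup M] [Module Aᵐᵒᵖ M] (x : M) :
    (M →ₗ[Aᵐᵒᵖ] Aᵐᵒᵖ) →ₗ[A] A where
  toFun f := unop (f x)
  map_add' _ _ := rfl
  map_smul' _ _ := rfl

theorem eq_dualEval {k : ℕ} (ψ : ((Fin k → Aᵐᵒᵖ) →ₗ[Aᵐᵒᵖ] Aᵐᵒᵖ) →ₗ[A] A) :
    ψ = dualEval fun i => op (ψ (LinearMap.proj i)) := by
  suffices ψ ∘ₗ (freeDualEquiv A k).symm.toLinearMap =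
      dualEval (fun i => op (ψ (LinearMap.proj i))) ∘ₗ (freeDualEquiv A k).symm.toLinearMap by
    simpa using congrArg (· ∘ₗ (freeDualEquiv A k).toLinearMap) this
  refine LinearMap.pi_ext fun i a => ?_
  have hsmul (c : A) (j : Fin k) :
      LinearMap.smulRight (1 : Aᵐᵒᵖ →ₗ[Aᵐᵒᵖ] Aᵐᵒᵖ) (op c) ∘ₗ LinearMap.proj j =
        c • (LinearMap.proj j : (Fin k → Aᵐᵒᵖ) →ₗ[Aᵐᵒᵖ] Aᵐᵒᵖ) :=
    LinearMap.ext fun _ => rfl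
  simp [freeDualEquiv, dualEval, hsmul]

theorem surjective_of_forall_exists_comp_lcomp_eq {k l : ℕ}
    (d : (Fin l → Aᵐᵒᵖ) →ₗ[Aᵐᵒᵖ] (Fin k → Aᵐᵒᵖ))
    (h : ∀ φ : ((Fin k → Aᵐᵒᵖ) →ₗ[Aᵐᵒᵖ] Aᵐᵒᵖ) →ₗ[A] A,
      ∃ ψ : ((Fin l → Aᵐᵒᵖ) →ₗ[Aᵐᵒᵖ] Aᵐᵒᵖ) →ₗ[A] A, ψ ∘ₗ LinearMap.lcomp A Aᵐᵒᵖ d = φ) :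
    Function.Surjective d := by
  intro x
  obtain ⟨ψ, hψ⟩ := h (dualEval x)
  refine ⟨fun i => op (ψ (LinearMap.proj i)), funext fun i => ?_⟩
  have := LinearMap.congr_fun hψ (LinearMap.proj i)
  rw [LinearMap.comp_apply, eq_dualEval ψ] at this
  exact congrArg op this

end Duality

section FreeResolution

variable (B : Type u) [Ring B]

noncomputable def finCoverRank (M : Type u) [AddCommGroup M] [Module B M] [Module.Finite B M] :
    ℕ :=
  (Module.Finite.exists_fin' B M).choose

noncomputable def finCover (M : Type u) [AddCommGroup M] [Module B M] [Module.Finite B M] :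
    (Fin (finCoverRank B M) → B) →ₗ[B] M :=
  (Module.Finite.exists_fin' B M).choose_spec.choose

theorem finCover_surjective (M : Type u) [AddCommGroup M] [Module B M] [Module.Finite B M] :
    Function.Surjective (finCover B M) :=
  (Module.Finite.exists_fin' B M).choose_spec.choose_spec

variable [IsNoetherianRing B] (M : Type u) [AddCommGroup M] [Module B M] [Module.Finite B M]

/-- The `n`-th syzygy of `M`, as a submodule of the `n`-th term `Fin k → B` of the resolution. -/
noncomputable def syzygy : ℕ → Σ k : ℕ, Submodule B (Fin k → B)
  | 0 => ⟨finCoverRank B M, LinearMap.ker (finCover B M)⟩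
  | n + 1 => ⟨finCoverRank B (syzygy n).2, LinearMap.ker (finCover B (syzygy n).2)⟩

noncomputable def freeRes : ProjRes B M where
  P n := Fin (syzygy B M n).1 → B
  proj _ := inferInstance
  d n := (syzygy B M n).2.subtype ∘ₗ finCover B (syzygy B M n).2
  π := finCover B M
  surj := finCover_surjective B M
  exact_at_zero := (finCover_surjective B _).comp_exact_iff_exact.2
    (LinearMap.exact_subtype_ker_map _)
  exact _ := (finCover_surjective B _).comp_exact_iff_exact.2
    ((Submodule.injective_subtype _).comp_exact_iff_exact.2 (LinearMap.exact_subtype_ker_map _))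

end FreeResolution

theorem subsingleton_of_forall_subsingleton_extGrp {A : Type u} [Ring A]
    [IsNoetherianRing Aᵐᵒᵖ] (hA : idim A A < ⊤) (M : Type u) [AddCommGroup M]
    [Module Aᵐᵒᵖ M] [Module.Finite Aᵐᵒᵖ M]
    (hM : ∀ i, Subsingleton (ExtGrp (freeRes Aᵐᵒᵖ M) Aᵐᵒᵖ i)) : Subsingleton M := by
  set R := freeRes Aᵐᵒᵖ M
  obtain ⟨m, RA, hRA⟩ := exists_injCores_of_idim_lt_top hA
  have hsurj : Function.Surjective (R.d 0) := by
    refine surjective_of_forall_exists_comp_lcomp_eq (R.d 0) fun φ =>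
      exists_comp_eq_of_exact_of_injCores m RA hRA (fun n => R.P n →ₗ[Aᵐᵒᵖ] Aᵐᵒᵖ)
        (fun _ => inferInstanceAs (Module.Projective A ((Fin _ → Aᵐᵒᵖ) →ₗ[Aᵐᵒᵖ] Aᵐᵒᵖ)))
        (fun n => LinearMap.lcomp A Aᵐᵒᵖ (R.d n))
        (fun n => exact_comp_of_subsingleton_extGrp R (hM (n + 1))) φ ?_
    intro f hf
    rw [AddSubgroup.mem_bot.1 (mem_extCobound_of_subsingleton R (hM 0) f hf)]
    exact φ.ker.zero_mem
  have hπ : R.π = 0 := (LinearMap.surjective_iff_eq_zero_of_exact R.exact_at_zero).1 hsurj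
  refine subsingleton_of_forall_eq 0 fun x => ?_
  obtain ⟨y, rfl⟩ := R.surj x
  rw [hπ, LinearMap.zero_apply]

/-- Let `A` be an Iwanaga-Gorenstein finite dimensional algebra over a
field `K`.  Then every simple right `A`-module `S` (= left `Aᵐᵒᵖ`-module) has finite
grade, i.e. there is some `i ≥ 0` with `Ext_A^i(S, A) ≠ 0`. -/
theorem statement_0 (K A : Type u) [Field K] [Ring A] [Algebra K A] [FiniteDimensional K A]
    (hIG : IsIwanagaGorensteinAlg A)
    (S : Type u) [AddCommGroup S] [Module Aᵐᵒᵖ S] (hS : IsSimpleModule Aᵐᵒᵖ S) :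
    ∃ i : ℕ, ExtRegNonzero Aᵐᵒᵖ S i := by
  have : IsNoetherianRing Aᵐᵒᵖ := isNoetherian_of_tower K inferInstance
  by_contra! hvanish
  have : Nontrivial S := IsSimpleModule.nontrivial Aᵐᵒᵖ S
  refine not_subsingleton S (subsingleton_of_forall_subsingleton_extGrp hIG.2 S fun i => ?_)
  exact not_nontrivial_iff_subsingleton.1 fun h => hvanish i ⟨_, h⟩
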